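/- The minimax region R_mm contains the joint significance rejection region: for any unit fraction α, {(x, y) : |x| > Φ⁻¹(1 − α/2), |y| > Φ⁻¹(1 − α/2)} ⊆ R_mm (up to the measure-zero grid lines), and consequently P((Z_x, Z_y) ∈ R_mm) ≥ P((Z_x, Z_y) ∈ R_JS) for every (δ_x, δ_y), so the minimax test is uniformly at least as powerful as the joint significance test. -/

import Mathlib

open MeasureTheory ProbabilityTheory Set Filter Pointwise

/-- The standard normal cumulative distribution function Φ. -/
noncomputable def stdPhi (x : ℝ) : ℝ := ((gaussianReal 0 1) (Set.Iic x)).toReal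

/-- The inverse Φ⁻¹ of the standard normal CDF. -/
noncomputable def stdPhiInv : ℝ → ℝ := Function.invFun stdPhi

/-- The law of (Z_x, Z_y) ~ N((dx, dy), I₂). -/
noncomputable def gauss2 (dx dy : ℝ) : Measure (ℝ × ℝ) :=
  (gaussianReal dx 1).prod (gaussianReal dy 1)

/-- a_k = Φ⁻¹(k·α/2) where α = 1/N. -/
noncomputable def aseq (N k : ℕ) : ℝ := stdPhiInv ((k : ℝ) / (2 * N))

/-- The interval (a_{k-1}, a_k), with a_0 = -∞ and a_{2N} = ∞. -/
noncomputable def band (N k : ℕ) : Set ℝ :=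
  if k = 1 then Set.Iio (aseq N 1)
  else if k = 2 * N then Set.Ioi (aseq N (2 * N - 1))
  else Set.Ioo (aseq N (k - 1)) (aseq N k)

/-- The minimax rejection region R_mm: diagonal and anti-diagonal open squares. -/
noncomputable def Rmm (N : ℕ) : Set (ℝ × ℝ) :=
  (⋃ k ∈ Finset.Icc 1 (2 * N), band N k ×ˢ band N k) ∪
  (⋃ k ∈ Finset.Icc 1 (2 * N), band N k ×ˢ (-(band N k)))

lemma gauss_noatom (x : ℝ) : (gaussianReal 0 1) {x} = 0 := by
  rw [gaussianReal_of_var_ne_zero 0 one_ne_zero,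
    withDensity_apply _ (measurableSet_singleton x)]
  exact setLIntegral_measure_zero _ _ (measure_singleton x)

lemma gauss_pos {x y : ℝ} (h : x < y) : 0 < (gaussianReal 0 1) (Ioo x y) := by
  rw [gaussianReal_of_var_ne_zero 0 one_ne_zero,
    withDensity_apply _ measurableSet_Ioo]
  by_contra hz
  push_neg at hz
  have h0 : ∫⁻ a in Ioo x y, gaussianPDF 0 1 a ∂volume = 0 := le_antisymm hz (zero_le)
  rw [lintegral_eq_zero_iff (measurable_gaussianPDF 0 1)] at h0
  have h1 : volume.restrict (Ioo x y) {a : ℝ | ¬ gaussianPDF 0 1 a = 0} = 0 := h0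
  have hu : {a : ℝ | ¬ gaussianPDF 0 1 a = 0} = Set.univ := by
    ext a; simp [(gaussianPDF_pos 0 one_ne_zero a).ne']
  rw [hu, Measure.restrict_apply_univ] at h1
  simp [Real.volume_Ioo, h, sub_pos.mpr h] at h1
  exact absurd h1 (not_le.mpr h)

lemma stdPhi_eq_cdf (x : ℝ) : stdPhi x = cdf (gaussianReal 0 1) x :=
  (cdf_eq_real _ x).symm

lemma stdPhi_strictMono : StrictMono stdPhi := by
  intro x y hxy
  have h1 : (gaussianReal 0 1) (Iic x) < (gaussianReal 0 1) (Iic y) := by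
    calc (gaussianReal 0 1) (Iic x)
        < (gaussianReal 0 1) (Iic x) + (gaussianReal 0 1) (Ioo x y) :=
          ENNReal.lt_add_right (measure_ne_top _ _) (gauss_pos hxy).ne'
      _ = (gaussianReal 0 1) (Iic x ∪ Ioo x y) :=
          (measure_union ((Set.Iic_disjoint_Ioi le_rfl).mono_right Set.Ioo_subset_Ioi_self)
            measurableSet_Ioo).symm
      _ ≤ (gaussianReal 0 1) (Iic y) := measure_mono (Set.union_subset
            (Set.Iic_subset_Iic.mpr hxy.le) (fun z hz => hz.2.le))
  exact ENNReal.toReal_lt_toReal (measure_ne_top _ _) (measure_ne_top _ _) |>.mpr h1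

lemma stdPhi_continuous : Continuous stdPhi := by
  have h := funext stdPhi_eq_cdf
  rw [h]
  refine continuous_iff_continuousAt.mpr fun x => ?_
  have hm : Monotone (cdf (gaussianReal 0 1)) := (cdf _).mono
  rw [hm.continuousAt_iff_leftLim_eq_rightLim, (cdf _).rightLim_eq]
  have hs : (cdf (gaussianReal 0 1)).measure {x} = 0 := by
    rw [measure_cdf]; exact gauss_noatom x
  rw [StieltjesFunction.measure_singleton] at hs
  have h2 : cdf (gaussianReal 0 1) x - Function.leftLim (cdf (gaussianReal 0 1)) x ≤ 0 := by
    by_contra hc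
    push_neg at hc
    exact (ENNReal.ofReal_pos.mpr hc).ne' hs
  have h3 := hm.leftLim_le (le_refl x)
  linarith

lemma gauss_map_neg : (gaussianReal 0 1).map (fun z : ℝ => -z) = gaussianReal 0 1 := by
  have h := gaussianReal_map_const_mul (μ := 0) (v := 1) (-1)
  have hv : (⟨(-1:ℝ)^2, sq_nonneg (-1 : ℝ)⟩ : NNReal) * 1 = 1 := by
    ext; norm_num
  simp only [neg_mul, one_mul, mul_zero, hv] at h
  convert h using 2
  ext; norm_num

lemma stdPhi_neg (x : ℝ) : stdPhi (-x) = 1 - stdPhi x := by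
  have h1 : (gaussianReal 0 1) (Iic (-x)) = (gaussianReal 0 1) (Ici x) := by
    conv_lhs => rw [← gauss_map_neg]
    rw [Measure.map_apply (measurable_neg) measurableSet_Iic]
    congr 1
    ext z
    simp [neg_le]
  have h2 : (gaussianReal 0 1) (Ici x) = 1 - (gaussianReal 0 1) (Iio x) := by
    rw [← Set.compl_Iio, prob_compl_eq_one_sub measurableSet_Iio]
  have h3 : (gaussianReal 0 1) (Iio x) = (gaussianReal 0 1) (Iic x) := by
    rw [← Set.Iio_union_right, measure_union (by simp) (measurableSet_singleton x),
      gauss_noatom, add_zero]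
  rw [stdPhi, h1, h2, h3, stdPhi,
    ENNReal.toReal_sub_of_le prob_le_one ENNReal.one_ne_top]
  simp

lemma stdPhi_surj {p : ℝ} (h0 : 0 < p) (h1 : p < 1) : ∃ x, stdPhi x = p := by
  have hb : ∀ᶠ x in atBot, stdPhi x < p := by
    have := tendsto_cdf_atBot (gaussianReal 0 1)
    have h := this.eventually_lt_const h0
    filter_upwards [h] with x hx
    rwa [stdPhi_eq_cdf]
  have ht : ∀ᶠ x in atTop, p < stdPhi x := by
    have := tendsto_cdf_atTop (gaussianReal 0 1)
    have h := this.eventually_const_lt h1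
    filter_upwards [h] with x hx
    rwa [stdPhi_eq_cdf]
  obtain ⟨a, ha⟩ := hb.exists
  obtain ⟨b, hb'⟩ := ht.exists
  have hab : a ≤ b := by
    by_contra hc
    push_neg at hc
    exact absurd (stdPhi_strictMono hc) (by linarith)
  have := intermediate_value_Icc hab stdPhi_continuous.continuousOn
  obtain ⟨x, _, hx⟩ := this ⟨ha.le, hb'.le⟩
  exact ⟨x, hx⟩

lemma stdPhiInv_right {p : ℝ} (h0 : 0 < p) (h1 : p < 1) :
    stdPhi (Function.invFun stdPhi p) = p :=
  Function.invFun_eq (stdPhi_surj h0 h1)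

lemma stdPhiInv_left (x : ℝ) : Function.invFun stdPhi (stdPhi x) = x :=
  Function.leftInverse_invFun stdPhi_strictMono.injective x

/-- For unit fraction α = 1/N, the (interior of the) joint significance rejection region
{|x| > Φ⁻¹(1 − α/2), |y| > Φ⁻¹(1 − α/2)} is contained in R_mm, and consequently the
minimax test is uniformly at least as powerful as the joint significance test:
P((Z_x,Z_y) ∈ R_JS) ≤ P((Z_x,Z_y) ∈ R_mm) for every (δ_x, δ_y). -/
theorem stmt11 (N : ℕ) (hN : 0 < N) :
    {p : ℝ × ℝ | stdPhiInv (1 - 1 / (2 * (N : ℝ))) < |p.1| ∧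
        stdPhiInv (1 - 1 / (2 * (N : ℝ))) < |p.2|} ⊆ Rmm N ∧
    ∀ δx δy : ℝ,
      ((gauss2 δx δy) {p : ℝ × ℝ | stdPhiInv (1 - 1 / (2 * (N : ℝ))) < |p.1| ∧
          stdPhiInv (1 - 1 / (2 * (N : ℝ))) < |p.2|}).toReal
        ≤ ((gauss2 δx δy) (Rmm N)).toReal := by
  have h2N : (0:ℝ) < 2 * N := by positivity
  have hNr : (1:ℝ) ≤ N := by exact_mod_cast hN
  set c := stdPhiInv (1 - 1 / (2 * (N : ℝ))) with hc_def
  have hp0 : (0:ℝ) < 1 - 1 / (2 * (N : ℝ)) := by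
    have : 1 / (2 * (N:ℝ)) ≤ 1 / 2 := by
      apply one_div_le_one_div_of_le <;> linarith
    linarith
  have hp1 : 1 - 1 / (2 * (N : ℝ)) < 1 := by
    have : 0 < 1 / (2 * (N:ℝ)) := by positivity
    linarith
  have hc : stdPhi c = 1 - 1 / (2 * (N : ℝ)) := stdPhiInv_right hp0 hp1
  have key1 : aseq N (2 * N - 1) = c := by
    rw [aseq, hc_def, stdPhiInv]
    congr 1
    rw [Nat.cast_sub (by omega)]
    push_cast
    field_simp
  have key2 : aseq N 1 = -c := by
    have hneg : stdPhi (-c) = 1 / (2 * (N : ℝ)) := by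
      rw [stdPhi_neg, hc]; ring
    rw [aseq, stdPhiInv, Nat.cast_one, ← hneg, stdPhiInv_left]
  have hb2N : band N (2 * N) = Set.Ioi c := by
    rw [band, if_neg (by omega), if_pos rfl, key1]
  have hb1 : band N 1 = Set.Iio (-c) := by
    rw [band, if_pos rfl, key2]
  have hk1 : 1 ∈ Finset.Icc 1 (2 * N) := by
    rw [Finset.mem_Icc]; omega
  have hk2 : 2 * N ∈ Finset.Icc 1 (2 * N) := by
    rw [Finset.mem_Icc]; omega
  have hsub : {p : ℝ × ℝ | c < |p.1| ∧ c < |p.2|} ⊆ Rmm N := by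
    rintro ⟨x, y⟩ ⟨h1, h2⟩
    rw [Rmm]
    rcases lt_abs.mp h1 with hx | hx <;> rcases lt_abs.mp h2 with hy | hy
    · exact Or.inl (Set.mem_iUnion₂.mpr ⟨2 * N, hk2, by
        rw [hb2N]; exact ⟨hx, hy⟩⟩)
    · exact Or.inr (Set.mem_iUnion₂.mpr ⟨2 * N, hk2, by
        rw [hb2N]; exact ⟨hx, Set.mem_neg.mpr hy⟩⟩)
    · exact Or.inr (Set.mem_iUnion₂.mpr ⟨1, hk1, by
        rw [hb1]
        refine ⟨lt_neg.mp hx, Set.mem_neg.mpr ?_⟩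
        simpa using hy⟩)
    · exact Or.inl (Set.mem_iUnion₂.mpr ⟨1, hk1, by
        rw [hb1]; exact ⟨lt_neg.mp hx, lt_neg.mp hy⟩⟩)
  refine ⟨hsub, fun δx δy => ?_⟩
  have hprob : IsProbabilityMeasure (gauss2 δx δy) := by
    unfold gauss2; infer_instance
  exact ENNReal.toReal_mono (measure_ne_top _ _) (measure_mono hsub)
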